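/- arXiv:2605.06580 — 6 statements merged into one kernel-verified Lean document; each statement's English description precedes it below -/
import Mathlib

section
/- In the skew polynomial ring R = F_{q^t}[X; θ], a nonzero element g satisfies gR = Rg (i.e., g is invariant) if and only if g = a · v(X) · X^l for some a ∈ F_{q^t}^*, some v(X) in the center Z(R) = F_q[X^t], and some l ∈ ℕ. -/
open Polynomial

/-- Multiplication in the skew polynomial ring `F[X;θ]` (with `X·a = θ(a)·X`), where skew
polynomials are represented by their coefficient polynomials: for `f = ∑ f_i X^i`,
`f ⋆ g = ∑_i C f_i * (g mapped by θ^i) * X^i`. -/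
noncomputable def skewMul {F : Type} [Field F] (θ : F ≃+* F) (f g : Polynomial F) :
    Polynomial F :=
  f.sum fun i a => Polynomial.C a * g.map ((θ ^ i : F ≃+* F) : F →+* F) * Polynomial.X ^ i

namespace SkewAux

variable {F : Type} [Field F] (θ : F ≃+* F)

lemma coeff_skewMul (f g : Polynomial F) (n : ℕ) :
    (skewMul θ f g).coeff n
      = ∑ i ∈ Finset.range (n + 1), f.coeff i * (θ ^ i : F ≃+* F) (g.coeff (n - i)) := by
  rw [skewMul, Polynomial.sum, finset_sum_coeff]
  have h1 : ∀ i ∈ f.support,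
      (C (f.coeff i) * g.map ((θ ^ i : F ≃+* F) : F →+* F) * X ^ i).coeff n
        = if i ∈ Finset.range (n + 1) then
            f.coeff i * (θ ^ i : F ≃+* F) (g.coeff (n - i)) else 0 := by
    intro i _
    rw [coeff_mul_X_pow']
    simp only [Finset.mem_range, Nat.lt_succ_iff]
    split_ifs with h
    · rw [coeff_C_mul, coeff_map]; rfl
    · rfl
  rw [Finset.sum_congr rfl h1, ← Finset.sum_filter]
  apply Finset.sum_subset
  · intro i hi
    simp only [Finset.mem_filter] at hi
    exact hi.2
  · intro i hir hi
    by_cases hs : i ∈ f.support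
    · exact absurd (Finset.mem_filter.mpr ⟨hs, hir⟩) hi
    · rw [Polynomial.notMem_support_iff.mp hs, zero_mul]

@[simp] lemma one_apply' (x : F) : (1 : F ≃+* F) x = x := rfl

lemma pow_fix {x : F} (hx : θ x = x) (i : ℕ) : (θ ^ i : F ≃+* F) x = x := by
  induction i with
  | zero => rw [pow_zero]; rfl
  | succ n ih =>
    rw [pow_succ]
    show (θ ^ n : F ≃+* F) (θ x) = x
    rw [hx, ih]

lemma skewMul_zero_left (g : Polynomial F) : skewMul θ 0 g = 0 :=
  Polynomial.sum_zero_index _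

lemma coeff_skewMul_C_right (g : Polynomial F) (b : F) (n : ℕ) :
    (skewMul θ g (C b)).coeff n = g.coeff n * (θ ^ n : F ≃+* F) b := by
  rw [coeff_skewMul]
  rw [Finset.sum_eq_single n]
  · simp
  · intro i hi hne
    have : n - i ≠ 0 := by simp only [Finset.mem_range, Nat.lt_succ_iff] at hi; omega
    rw [coeff_C, if_neg this, map_zero, mul_zero]
  · intro h
    exact absurd (Finset.self_mem_range_succ n) h

lemma skewMul_C_left (c : F) (g : Polynomial F) : skewMul θ (C c) g = C c * g := by
  ext n
  rw [coeff_skewMul, coeff_C_mul]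
  rw [Finset.sum_eq_single 0]
  · simp
  · intro i _ hne
    rw [coeff_C, if_neg hne, zero_mul]
  · intro h
    exact absurd (Finset.mem_range.mpr (Nat.succ_pos n)) h

lemma skewMul_X_right (g : Polynomial F) : skewMul θ g X = g * X := by
  ext n
  rw [coeff_skewMul]
  cases n with
  | zero =>
    simp [coeff_X]
  | succ m =>
    rw [coeff_mul_X, Finset.sum_eq_single m]
    · have : m + 1 - m = 1 := by omega
      rw [this, coeff_X_one, map_one, mul_one]
    · intro i hi hne
      have : ¬ (1 = m + 1 - i) := by
        simp only [Finset.mem_range, Nat.lt_succ_iff] at hi; omega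
      rw [coeff_X, if_neg this, map_zero, mul_zero]
    · intro h
      exact absurd (Finset.mem_range.mpr (by omega)) h

lemma skewMul_CX_left (c : F) (g : Polynomial F) :
    skewMul θ (C c * X) g = C c * g.map (θ : F →+* F) * X := by
  ext n
  rw [coeff_skewMul]
  cases n with
  | zero =>
    simp [Finset.sum_range_one, coeff_mul, Finset.Nat.antidiagonal_zero]
  | succ m =>
    rw [coeff_mul_X, coeff_C_mul, coeff_map, Finset.sum_eq_single 1]
    · have h1 : (C c * X).coeff 1 = c := by simp
      rw [h1]
      have : m + 1 - 1 = m := by omega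
      rw [this, pow_one]
      rfl
    · intro i hi hne
      have : (C c * X).coeff i = 0 := by
        rw [coeff_C_mul, coeff_X, if_neg (fun h => hne h.symm), mul_zero]
      rw [this, zero_mul]
    · intro h
      exact absurd (Finset.mem_range.mpr (by omega)) h

lemma map_ne_zero' (e : F ≃+* F) {x : F} (hx : x ≠ 0) : e x ≠ 0 := fun h =>
  hx (e.injective (h.trans (map_zero e).symm))

lemma coeff_skewMul_top (f g : Polynomial F) :
    (skewMul θ f g).coeff (f.natDegree + g.natDegree)
      = f.leadingCoeff * (θ ^ f.natDegree : F ≃+* F) g.leadingCoeff := by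
  rw [coeff_skewMul, Finset.sum_eq_single f.natDegree]
  · rw [Nat.add_sub_cancel_left]; rfl
  · intro i hi hne
    simp only [Finset.mem_range, Nat.lt_succ_iff] at hi
    rcases lt_or_gt_of_ne hne with h | h
    · rw [coeff_eq_zero_of_natDegree_lt (p := g) (by omega), map_zero, mul_zero]
    · rw [coeff_eq_zero_of_natDegree_lt (p := f) h, zero_mul]
  · intro h
    exact absurd (Finset.mem_range.mpr (by omega)) h

lemma skewMul_coeff_eq_zero_of_gt (f g : Polynomial F) {n : ℕ}
    (hn : f.natDegree + g.natDegree < n) : (skewMul θ f g).coeff n = 0 := by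
  rw [coeff_skewMul]
  apply Finset.sum_eq_zero
  intro i hi
  simp only [Finset.mem_range, Nat.lt_succ_iff] at hi
  by_cases h : i ≤ f.natDegree
  · rw [coeff_eq_zero_of_natDegree_lt (p := g) (by omega), map_zero, mul_zero]
  · rw [coeff_eq_zero_of_natDegree_lt (p := f) (by omega), zero_mul]

lemma coeff_skewMul_bot (f g : Polynomial F) :
    (skewMul θ f g).coeff (f.natTrailingDegree + g.natTrailingDegree)
      = f.trailingCoeff * (θ ^ f.natTrailingDegree : F ≃+* F) g.trailingCoeff := by
  rw [coeff_skewMul, Finset.sum_eq_single f.natTrailingDegree]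
  · rw [Nat.add_sub_cancel_left]; rfl
  · intro i hi hne
    simp only [Finset.mem_range, Nat.lt_succ_iff] at hi
    rcases lt_or_gt_of_ne hne with h | h
    · rw [coeff_eq_zero_of_lt_natTrailingDegree (p := f) h, zero_mul]
    · rw [coeff_eq_zero_of_lt_natTrailingDegree (p := g) (by omega), map_zero, mul_zero]
  · intro h
    exact absurd (Finset.mem_range.mpr (by omega)) h

lemma skewMul_coeff_eq_zero_of_lt (f g : Polynomial F) {n : ℕ}
    (hn : n < f.natTrailingDegree + g.natTrailingDegree) : (skewMul θ f g).coeff n = 0 := by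
  rw [coeff_skewMul]
  apply Finset.sum_eq_zero
  intro i hi
  simp only [Finset.mem_range, Nat.lt_succ_iff] at hi
  by_cases h : i < f.natTrailingDegree
  · rw [coeff_eq_zero_of_lt_natTrailingDegree (p := f) h, zero_mul]
  · rw [coeff_eq_zero_of_lt_natTrailingDegree (p := g) (by omega), map_zero, mul_zero]

lemma coeff_skewMul_top_ne_zero {f g : Polynomial F} (hf : f ≠ 0) (hg : g ≠ 0) :
    (skewMul θ f g).coeff (f.natDegree + g.natDegree) ≠ 0 := by
  rw [coeff_skewMul_top]
  exact mul_ne_zero (leadingCoeff_ne_zero.mpr hf)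
    (map_ne_zero' _ (leadingCoeff_ne_zero.mpr hg))

lemma skewMul_ne_zero {f g : Polynomial F} (hf : f ≠ 0) (hg : g ≠ 0) :
    skewMul θ f g ≠ 0 := fun h => coeff_skewMul_top_ne_zero θ hf hg (by rw [h, coeff_zero])

lemma natDegree_skewMul {f g : Polynomial F} (hf : f ≠ 0) (hg : g ≠ 0) :
    (skewMul θ f g).natDegree = f.natDegree + g.natDegree :=
  le_antisymm (natDegree_le_iff_coeff_eq_zero.mpr fun _ hN => skewMul_coeff_eq_zero_of_gt θ f g hN)
    (le_natDegree_of_ne_zero (coeff_skewMul_top_ne_zero θ hf hg))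

lemma natTrailingDegree_skewMul {f g : Polynomial F} (hf : f ≠ 0) (hg : g ≠ 0) :
    (skewMul θ f g).natTrailingDegree = f.natTrailingDegree + g.natTrailingDegree := by
  have hne : (skewMul θ f g).coeff (f.natTrailingDegree + g.natTrailingDegree) ≠ 0 := by
    rw [coeff_skewMul_bot]
    exact mul_ne_zero (trailingCoeff_nonzero_iff_nonzero.mpr hf)
      (map_ne_zero' _ (trailingCoeff_nonzero_iff_nonzero.mpr hg))
  exact le_antisymm (natTrailingDegree_le_of_ne_zero hne)
    (le_natTrailingDegree (skewMul_ne_zero θ hf hg)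
      fun _ hm => skewMul_coeff_eq_zero_of_lt θ f g hm)

noncomputable def diagT (φ : ℕ → F → F) (p : Polynomial F) : Polynomial F :=
  p.sum fun i b => C (φ i b) * X ^ i

lemma coeff_diagT (φ : ℕ → F → F) (hφ : ∀ i, φ i 0 = 0) (p : Polynomial F) (m : ℕ) :
    (diagT φ p).coeff m = φ m (p.coeff m) := by
  rw [diagT, Polynomial.sum, finset_sum_coeff]
  have h1 : ∀ i ∈ p.support, (C (φ i (p.coeff i)) * X ^ i).coeff m
      = if i = m then φ i (p.coeff i) else 0 := by
    intro i _
    rw [C_mul_X_pow_eq_monomial, coeff_monomial]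
  rw [Finset.sum_congr rfl h1, Finset.sum_ite_eq' p.support m fun i => φ i (p.coeff i)]
  split_ifs with h
  · rfl
  · rw [notMem_support_iff.mp h, hφ]

lemma pow_apply (q : ℕ) (hθ : ∀ x : F, θ x = x ^ q) (k : ℕ) (x : F) :
    (θ ^ k : F ≃+* F) x = x ^ q ^ k := by
  induction k generalizing x with
  | zero => rw [pow_zero, pow_zero, pow_one]; rfl
  | succ n ih =>
    rw [pow_succ]
    show (θ ^ n : F ≃+* F) (θ x) = _
    rw [hθ, ih, ← pow_mul, ← pow_succ']

lemma claimA (t : ℕ) (ht1 : (θ ^ t : F ≃+* F) = 1) (a : F) (v : Polynomial F) (l : ℕ)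
    (hv2 : ∀ j, v.coeff j ≠ 0 → t ∣ j) (f : Polynomial F) :
    skewMul θ (C a * v * X ^ l) f
      = C a * v * X ^ l * f.map ((θ ^ l : F ≃+* F) : F →+* F) := by
  ext n
  rw [coeff_skewMul, coeff_mul, Finset.Nat.sum_antidiagonal_eq_sum_range_succ_mk]
  apply Finset.sum_congr rfl
  intro i _
  rw [coeff_map]
  by_cases h : (C a * v * X ^ l).coeff i = 0
  · rw [h, zero_mul, zero_mul]
  · congr 1
    have h2 : l ≤ i ∧ v.coeff (i - l) ≠ 0 := by
      rw [coeff_mul_X_pow'] at h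
      by_cases hli : l ≤ i
      · refine ⟨hli, ?_⟩
        intro hv
        rw [if_pos hli, coeff_C_mul, hv, mul_zero] at h
        exact h rfl
      · rw [if_neg hli] at h
        exact absurd rfl h
    obtain ⟨k, hk⟩ := hv2 _ h2.2
    have hik : i = l + t * k := by omega
    rw [hik, pow_add, pow_mul, ht1, one_pow, mul_one]
    rfl

lemma claimB (a : F) (ha : a ≠ 0) (v : Polynomial F) (l : ℕ)
    (hv1 : ∀ j, θ (v.coeff j) = v.coeff j) (f : Polynomial F) :
    skewMul θ f (C a * v * X ^ l)
      = diagT (fun i b => b * (θ ^ i : F ≃+* F) a * a⁻¹) f * (C a * v * X ^ l) := by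
  ext n
  rw [coeff_skewMul, coeff_mul, Finset.Nat.sum_antidiagonal_eq_sum_range_succ_mk]
  apply Finset.sum_congr rfl
  intro i _
  rw [coeff_diagT _ (fun i => by simp) f i]
  by_cases h : l ≤ n - i
  · rw [coeff_mul_X_pow', if_pos h, coeff_C_mul]
    rw [map_mul, pow_fix θ (hv1 (n - i - l)) i]
    have hθa : (θ ^ i : F ≃+* F) a ≠ 0 := map_ne_zero' _ ha
    field_simp
  · rw [coeff_mul_X_pow', if_neg h, map_zero, mul_zero, mul_zero]

lemma theta_pow_t_eq_one [Fintype F] (q t : ℕ) (hF : Fintype.card F = q ^ t)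
    (hθ : ∀ x : F, θ x = x ^ q) : (θ ^ t : F ≃+* F) = 1 := by
  ext x
  rw [pow_apply θ q hθ, ← hF, FiniteField.pow_card]
  rfl

lemma ord_dvd [Fintype F] (q t : ℕ) (hF : Fintype.card F = q ^ t)
    (hθ : ∀ x : F, θ x = x ^ q) {m : ℕ}
    (hm : (θ ^ m : F ≃+* F) = 1) : t ∣ m := by
  have h2 : (1 : ℕ) < Fintype.card F := Fintype.one_lt_card
  have ht0 : 0 < t := by
    rcases Nat.eq_zero_or_pos t with h | h
    · rw [h, pow_zero] at hF; omega
    · exact h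
  have hq1 : 1 < q := by
    by_contra h
    have h3 : q ^ t ≤ 1 := by
      calc q ^ t ≤ 1 ^ t := Nat.pow_le_pow_left (by omega) t
      _ = 1 := one_pow t
    omega
  have ht1 : (θ ^ t : F ≃+* F) = 1 := theta_pow_t_eq_one θ q t hF hθ
  set r := m % t with hr
  have hr1 : (θ ^ r : F ≃+* F) = 1 := by
    have hdm : t * (m / t) + m % t = m := Nat.div_add_mod m t
    have h4 : (θ ^ m : F ≃+* F) = θ ^ r := by
      conv_lhs => rw [← hdm]
      rw [pow_add, pow_mul, ht1, one_pow, one_mul]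
    rw [← h4, hm]
  rcases Nat.eq_zero_or_pos r with h | hrpos
  · exact Nat.dvd_of_mod_eq_zero h
  · exfalso
    have hlt : r < t := Nat.mod_lt _ ht0
    have h1qr : 1 < q ^ r := Nat.one_lt_pow hrpos.ne' hq1
    set p : Polynomial F := X ^ q ^ r - X with hp
    have heval : ∀ x : F, p.eval x = 0 := by
      intro x
      have h5 : (θ ^ r : F ≃+* F) x = x := by rw [hr1]; rfl
      rw [pow_apply θ q hθ] at h5
      simp [hp, h5]
    have hdeg : p.natDegree = q ^ r := by
      rw [hp]
      have h6 : (X : Polynomial F).natDegree < (X ^ q ^ r : Polynomial F).natDegree := by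
        rw [natDegree_X, natDegree_X_pow]
        exact h1qr
      rw [natDegree_sub_eq_left_of_natDegree_lt h6, natDegree_X_pow]
    have hp0 : p ≠ 0 := by
      intro h
      rw [h, natDegree_zero] at hdeg
      omega
    have hcard : p.natDegree < Fintype.card F := by
      rw [hdeg, hF]
      exact Nat.pow_lt_pow_right hq1 hlt
    exact hp0 (Polynomial.eq_zero_of_natDegree_lt_card_of_eval_eq_zero p
      Function.injective_id (fun x => heval x) hcard)

end SkewAux


open SkewAux in
/-- In `R = F_{q^t}[X;θ]`, a nonzero `g` is invariant (`gR = Rg`) if and only if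
`g = a · v(X) · X^l` with `a ∈ F_{q^t}^*`, `v` in the center `Z(R) = F_q[X^t]` (i.e. the
coefficients of `v` are fixed by `θ` and supported on multiples of `t`), and `l ∈ ℕ`. -/
theorem invariant_iff (q t : ℕ) (F : Type) [Field F] [Fintype F]
    (hF : Fintype.card F = q ^ t) (θ : F ≃+* F) (hθ : ∀ x : F, θ x = x ^ q)
    (g : Polynomial F) (hg : g ≠ 0) :
    {x | ∃ f, x = skewMul θ g f} = {x | ∃ f, x = skewMul θ f g} ↔
      ∃ (a : F) (v : Polynomial F) (l : ℕ), a ≠ 0 ∧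
        (∀ j, θ (v.coeff j) = v.coeff j) ∧ (∀ j, v.coeff j ≠ 0 → t ∣ j) ∧
        g = Polynomial.C a * v * Polynomial.X ^ l := by
  classical
  have ht1 : (θ ^ t : F ≃+* F) = 1 := theta_pow_t_eq_one θ q t hF hθ
  constructor
  · intro hset
    set l := g.natTrailingDegree with hl
    have ha : g.coeff l ≠ 0 := trailingCoeff_nonzero_iff_nonzero.mpr hg
    set a := g.coeff l with ha'
    -- Step 1: the relation coming from g ⋆ X
    have hXmem : g * X ∈ {x | ∃ f, x = skewMul θ g f} := ⟨X, (skewMul_X_right θ g).symm⟩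
    rw [hset] at hXmem
    obtain ⟨u, hu⟩ := hXmem
    have hgX : g * X ≠ 0 := mul_ne_zero hg X_ne_zero
    have hu0 : u ≠ 0 := by
      rintro rfl
      rw [skewMul_zero_left] at hu
      exact hgX hu
    have hdu : u.natDegree = 1 := by
      have h1 := natDegree_skewMul θ hu0 hg
      rw [← hu, natDegree_mul hg X_ne_zero, natDegree_X] at h1
      omega
    have htu : u.natTrailingDegree = 1 := by
      have h1 := natTrailingDegree_skewMul θ hu0 hg
      rw [← hu, natTrailingDegree_mul hg X_ne_zero, natTrailingDegree_X] at h1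
      omega
    set c := u.coeff 1 with hcdef
    have hu_eq : u = C c * X := by
      ext m
      rw [coeff_C_mul, coeff_X]
      by_cases hm : m = 1
      · rw [if_pos hm.symm, mul_one, hm]
      · rw [if_neg (fun h => hm h.symm), mul_zero]
        rcases Nat.lt_or_ge m 1 with h | h
        · exact coeff_eq_zero_of_lt_natTrailingDegree (by omega)
        · have hm2 : 1 < m := by omega
          exact coeff_eq_zero_of_natDegree_lt (by omega)
    rw [hu_eq, skewMul_CX_left] at hu
    have hgc : g = C c * g.map (θ : F →+* F) := mul_right_cancel₀ X_ne_zero hu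
    have hcoef : ∀ j, g.coeff j = c * θ (g.coeff j) := by
      intro j
      conv_lhs => rw [hgc]
      rw [coeff_C_mul, coeff_map]
      rfl
    have hc0 : c ≠ 0 := by
      intro h
      have h1 := hcoef l
      rw [h, zero_mul] at h1
      exact ha h1
    have hθcoef : ∀ k, θ (g.coeff k) = c⁻¹ * g.coeff k := fun k =>
      (eq_inv_mul_iff_mul_eq₀ hc0).mpr (hcoef k).symm
    -- Step 2: the relation coming from g ⋆ C b
    have hstep2 : ∀ b : F, ∀ n, g.coeff n ≠ 0 →
        (θ ^ n : F ≃+* F) b = (θ ^ l : F ≃+* F) b := by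
      intro b n hn
      by_cases hb : b = 0
      · rw [hb, map_zero, map_zero]
      have hmem : skewMul θ g (C b) ∈ {x | ∃ f, x = skewMul θ g f} := ⟨C b, rfl⟩
      rw [hset] at hmem
      obtain ⟨f, hf⟩ := hmem
      have hG0 : skewMul θ g (C b) ≠ 0 := by
        intro h
        have h1 : (skewMul θ g (C b)).coeff l = g.coeff l * (θ ^ l : F ≃+* F) b :=
          coeff_skewMul_C_right θ g b l
        rw [h, coeff_zero] at h1
        exact mul_ne_zero ha (map_ne_zero' _ hb) h1.symm
      have hf0 : f ≠ 0 := by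
        rintro rfl
        rw [skewMul_zero_left] at hf
        exact hG0 hf
      have hCb0 : (C b : Polynomial F) ≠ 0 := fun h => hb (by
        have h2 := congrArg (fun p => Polynomial.coeff p 0) h
        simpa using h2)
      have hdf : f.natDegree = 0 := by
        have h1 := natDegree_skewMul θ hg hCb0
        have h2 := natDegree_skewMul θ hf0 hg
        rw [← hf, h1, natDegree_C] at h2
        omega
      have hfc : f = C (f.coeff 0) := eq_C_of_natDegree_eq_zero hdf
      rw [hfc, skewMul_C_left] at hf
      have hco : ∀ k, g.coeff k * (θ ^ k : F ≃+* F) b = f.coeff 0 * g.coeff k := by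
        intro k
        have h3 := congrArg (fun p => Polynomial.coeff p k) hf
        simpa [coeff_skewMul_C_right, coeff_C_mul] using h3
      have hcl : (θ ^ l : F ≃+* F) b = f.coeff 0 := by
        have h3 := hco l
        rw [mul_comm (f.coeff 0) (g.coeff l)] at h3
        exact mul_left_cancel₀ ha h3
      have h4 := hco n
      rw [mul_comm (f.coeff 0) (g.coeff n)] at h4
      rw [mul_left_cancel₀ hn h4, hcl]
    -- Step 3: support condition
    have hsup : ∀ n, g.coeff n ≠ 0 → t ∣ (n - l) := by
      intro n hn
      apply ord_dvd θ q t hF hθ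
      ext y
      rw [one_apply']
      obtain ⟨b, rfl⟩ := (θ ^ l : F ≃+* F).surjective y
      have h5 := hstep2 b n hn
      have hln : l ≤ n := natTrailingDegree_le_of_ne_zero hn
      have h6 : (θ ^ n : F ≃+* F) b = (θ ^ (n - l) : F ≃+* F) ((θ ^ l : F ≃+* F) b) := by
        conv_lhs => rw [show n = (n - l) + l by omega]
        rw [pow_add]
        rfl
      rw [h6] at h5
      exact h5
    -- Assemble
    have hdvd : X ^ l ∣ g := X_pow_dvd_iff.mpr fun d hd =>
      coeff_eq_zero_of_lt_natTrailingDegree hd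
    obtain ⟨v0, hv0⟩ := hdvd
    have hcj : ∀ j, v0.coeff j = g.coeff (j + l) := by
      intro j
      rw [hv0, coeff_X_pow_mul]
    refine ⟨a, C a⁻¹ * v0, l, ha, ?_, ?_, ?_⟩
    · intro j
      rw [coeff_C_mul, hcj, map_mul]
      have h8 : θ a⁻¹ = c * a⁻¹ := by
        rw [map_inv₀, hθcoef l, mul_inv, inv_inv, mul_comm]
      rw [h8, hθcoef (j + l)]
      field_simp
    · intro j hj
      rw [coeff_C_mul, hcj] at hj
      have h9 : g.coeff (j + l) ≠ 0 := right_ne_zero_of_mul hj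
      have h10 := hsup (j + l) h9
      simpa using h10
    · rw [← mul_assoc, ← C_mul, mul_inv_cancel₀ ha, C_1, one_mul, hv0, mul_comm]
  · rintro ⟨a, v, l, ha, hv1, hv2, rfl⟩
    ext p
    simp only [Set.mem_setOf_eq]
    constructor
    · rintro ⟨f, rfl⟩
      refine ⟨diagT (fun i b => b * a * ((θ ^ i : F ≃+* F) a)⁻¹)
        (f.map ((θ ^ l : F ≃+* F) : F →+* F)), ?_⟩
      rw [claimA θ t ht1 a v l hv2 f, claimB θ a ha v l hv1 _, mul_comm]
      congr 1
      ext m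
      rw [coeff_diagT _ (fun i => by simp), coeff_diagT _ (fun i => by simp)]
      have hθa : (θ ^ m : F ≃+* F) a ≠ 0 := map_ne_zero' _ ha
      field_simp
    · rintro ⟨f, rfl⟩
      refine ⟨(diagT (fun i b => b * (θ ^ i : F ≃+* F) a * a⁻¹) f).map
        ((θ ^ l : F ≃+* F).symm : F →+* F), ?_⟩
      rw [claimB θ a ha v l hv1 f, claimA θ t ht1 a v l hv2 _, Polynomial.map_map]
      have hcomp : ((θ ^ l : F ≃+* F) : F →+* F).comp
          ((θ ^ l : F ≃+* F).symm : F →+* F) = RingHom.id F := by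
        ext x
        simp
      rw [hcomp, Polynomial.map_id, mul_comm]
end

section
/- Let C ⊆ F_{q^t}^n be a linear code over F_{q^t} and F_{q^r} a subfield (r | t). Then the dual of the subfield subcode equals the trace code of the dual: (C ∩ F_{q^r}^n)^⊥ = Tr(C^⊥), where the dual on the left is taken inside F_{q^r}^n (Delsarte's theorem). -/
open Finset

lemma delsarte_sep {k : Type*} [Field k] {n : ℕ} (W : Submodule k (Fin n → k))
    {v : Fin n → k} (hv : v ∉ W) :
    ∃ u : Fin n → k, (∀ w ∈ W, ∑ i, u i * w i = 0) ∧ ∑ i, u i * v i ≠ 0 := by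
  have h0 : W.mkQ v ≠ 0 := by
    simpa [Submodule.mkQ_apply, Submodule.Quotient.mk_eq_zero] using hv
  have := (Module.forall_dual_apply_eq_zero_iff k (W.mkQ v)).not.mpr h0
  push_neg at this
  obtain ⟨φ, hφ⟩ := this
  set g : (Fin n → k) →ₗ[k] k := φ ∘ₗ W.mkQ with hg
  set u : Fin n → k := fun i => g (fun j => if i = j then 1 else 0) with hu
  have key : ∀ x : Fin n → k, ∑ i, u i * x i = g x := by
    intro x
    rw [LinearMap.pi_apply_eq_sum_univ g x]
    exact Finset.sum_congr rfl fun i _ => by rw [smul_eq_mul, mul_comm]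
  refine ⟨u, fun w hw => ?_, ?_⟩
  · rw [key w]
    simp [hg, LinearMap.comp_apply, (Submodule.Quotient.mk_eq_zero W).mpr hw]
  · rw [key v]
    exact hφ

/-- Delsarte: Let `C ⊆ F_{q^t}^n` be a linear code and `K = F_{q^r}` the
subfield with `q^r` elements (`r ∣ t`), characterized by `x ∈ K ↔ x^{q^r} = x`. Then the dual
(taken inside `K^n`) of the subfield subcode `C ∩ K^n` equals the trace code `Tr(C^⊥)`,
where `Tr(a) = ∑_{i=0}^{t/r−1} a^{q^{ri}}`. -/
theorem delsarte (p e q r t n : ℕ) (hp : p.Prime) (hq : q = p ^ e) (hrt : r ∣ t)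
    (F : Type) [Field F] [Fintype F] [CharP F p] (hF : Fintype.card F = q ^ t)
    (K : Subfield F) (hK : ∀ x : F, x ∈ K ↔ x ^ q ^ r = x)
    (C : Submodule F (Fin n → F)) :
    {z : Fin n → F | (∀ i, z i ∈ K) ∧
        ∀ c : Fin n → F, c ∈ C → (∀ i, c i ∈ K) → ∑ i, z i * c i = 0} =
      {v : Fin n → F | ∃ z : Fin n → F, (∀ c ∈ C, ∑ i, z i * c i = 0) ∧
        ∀ i, v i = ∑ j ∈ range (t / r), z i ^ q ^ (r * j)} := by
  classical
  haveI := Fact.mk hp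
  -- numeric preliminaries
  have hcard1 : 1 < Fintype.card F := Fintype.one_lt_card
  have hq1 : 1 < q := by
    by_contra h
    push_neg at h
    have h2 : q ^ t ≤ 1 := by
      calc q ^ t ≤ 1 ^ t := Nat.pow_le_pow_left h t
      _ = 1 := one_pow t
    omega
  have ht : 0 < t := by
    rcases Nat.eq_zero_or_pos t with h | h
    · rw [h, pow_zero] at hF; omega
    · exact h
  have hr : 0 < r := by
    rcases Nat.eq_zero_or_pos r with h | h
    · subst h; have := Nat.zero_dvd.mp hrt; omega
    · exact h
  set Q := q ^ r with hQdef
  set m := t / r with hmdef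
  have hQ1 : 1 < Q := Nat.one_lt_pow hr.ne' hq1
  have hm0 : 0 < m := Nat.div_pos (Nat.le_of_dvd ht hrt) hr
  have hQm : Q ^ m = q ^ t := by rw [← pow_mul, Nat.mul_div_cancel' hrt]
  have hQpow : ∀ j : ℕ, Q ^ j = p ^ (e * r * j) := by
    intro j; rw [hQdef, hq, ← pow_mul, ← pow_mul, ← mul_assoc]
  -- Frobenius facts
  have hfrobsum : ∀ (j : ℕ) {ι : Type} (s : Finset ι) (f : ι → F),
      (∑ i ∈ s, f i) ^ Q ^ j = ∑ i ∈ s, f i ^ Q ^ j := by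
    intro j ι s f
    rw [hQpow j]
    simpa only [iterateFrobenius_def] using map_sum (iterateFrobenius F p (e * r * j)) f s
  have hfrobadd : ∀ (a b : F) (j : ℕ), (a + b) ^ Q ^ j = a ^ Q ^ j + b ^ Q ^ j := by
    intro a b j
    rw [hQpow j]
    simpa only [iterateFrobenius_def] using map_add (iterateFrobenius F p (e * r * j)) a b
  have hxm : ∀ x : F, x ^ Q ^ m = x := by
    intro x; rw [hQm, ← hF]; exact FiniteField.pow_card x
  have hKfix : ∀ x ∈ K, ∀ j : ℕ, x ^ Q ^ j = x := by
    intro x hx j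
    induction j with
    | zero => simp
    | succ j ih => rw [pow_succ, pow_mul, ih]; exact (hK x).mp hx
  -- the trace map
  set Φ : F → F := fun x => ∑ j ∈ range m, x ^ Q ^ j with hΦdef
  have hΦeq : ∀ x : F, (∑ j ∈ range (t / r), x ^ q ^ (r * j)) = Φ x := by
    intro x
    exact Finset.sum_congr rfl fun j _ => by rw [pow_mul]
  have hΦK : ∀ x : F, Φ x ∈ K := by
    intro x
    rw [hK]
    have h1 : (Φ x) ^ q ^ r = ∑ j ∈ range m, x ^ Q ^ (j + 1) := by
      have hs := hfrobsum 1 (range m) (fun j => x ^ Q ^ j)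
      rw [pow_one] at hs
      rw [hΦdef]
      simp only
      rw [show (q ^ r : ℕ) = Q from rfl, hs]
      exact Finset.sum_congr rfl fun j _ => by rw [← pow_mul, ← pow_succ]
    have h2 : ∑ j ∈ range m, x ^ Q ^ (j + 1) = Φ x := by
      have e1 := Finset.sum_range_succ' (fun j => x ^ Q ^ j) m
      have e2 := Finset.sum_range_succ (fun j => x ^ Q ^ j) m
      have e3 : (∑ j ∈ range m, x ^ Q ^ (j + 1)) + x ^ Q ^ 0 =
          (∑ j ∈ range m, x ^ Q ^ j) + x ^ Q ^ m := by rw [← e1, ← e2]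
      rw [hxm x] at e3
      simp only [pow_zero, pow_one] at e3
      exact add_right_cancel e3
    rw [h1, h2]
  have hΦzero : Φ 0 = 0 := by
    rw [hΦdef]
    exact Finset.sum_eq_zero fun j _ => zero_pow (pow_ne_zero j (by omega))
  have hΦadd : ∀ a b : F, Φ (a + b) = Φ a + Φ b := by
    intro a b
    rw [hΦdef]
    simp only
    rw [← Finset.sum_add_distrib]
    exact Finset.sum_congr rfl fun j _ => hfrobadd a b j
  have hΦKmul : ∀ x ∈ K, ∀ y : F, Φ (x * y) = x * Φ y := by
    intro x hx y
    rw [hΦdef]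
    simp only
    rw [Finset.mul_sum]
    exact Finset.sum_congr rfl fun j _ => by rw [mul_pow, hKfix x hx j]
  have hΦsum : ∀ (f : Fin n → F), Φ (∑ i, f i) = ∑ i, Φ (f i) := by
    intro f
    rw [hΦdef]
    simp only
    rw [Finset.sum_comm]
    exact Finset.sum_congr rfl fun j _ => hfrobsum j univ f
  have hΦne : ∃ x : F, Φ x ≠ 0 := by
    set P : Polynomial F := ∑ j ∈ range m, Polynomial.X ^ Q ^ j with hP
    have hPeval : ∀ x, P.eval x = Φ x := by
      intro x
      rw [hP, Polynomial.eval_finset_sum]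
      simp [hΦdef]
    have hP1 : P.coeff 1 = 1 := by
      rw [hP, Polynomial.finset_sum_coeff]
      simp only [Polynomial.coeff_X_pow]
      rw [Finset.sum_eq_single_of_mem 0 (Finset.mem_range.mpr hm0)]
      · simp
      · intro j _ hj
        rw [if_neg]
        exact fun h => absurd h.symm (Nat.one_lt_pow hj hQ1).ne'
    have hP0 : P ≠ 0 := fun h => by simp [h] at hP1
    have hdeg : P.natDegree < Fintype.card F := by
      have h1 : P.natDegree ≤ Q ^ (m - 1) := by
        rw [hP]
        apply Polynomial.natDegree_sum_le_of_forall_le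
        intro j hj
        rw [Polynomial.natDegree_X_pow]
        exact Nat.pow_le_pow_right (by omega) (by have := Finset.mem_range.mp hj; omega)
      have h2 : Q ^ (m - 1) < Q ^ m := Nat.pow_lt_pow_right hQ1 (by omega)
      have h3 : Fintype.card F = Q ^ m := by rw [hF, hQm]
      omega
    obtain ⟨x, hx⟩ := P.exists_eval_ne_zero_of_natDegree_lt_card hP0
      (by rw [Cardinal.mk_fintype, Nat.cast_lt]; exact hdeg)
    exact ⟨x, by rwa [hPeval] at hx⟩
  -- the trace code, as a submodule over the subfield K
  set T : Submodule (↥K) (Fin n → ↥K) :=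
    { carrier := {w | ∃ z : Fin n → F, (∀ c ∈ C, ∑ i, z i * c i = 0) ∧
        ∀ i, (w i : F) = Φ (z i)},
      zero_mem' := ⟨0, by simp, fun i => by simp [hΦzero]⟩,
      add_mem' := by
        rintro w₁ w₂ ⟨z₁, hz₁, he₁⟩ ⟨z₂, hz₂, he₂⟩
        refine ⟨z₁ + z₂, fun c hc => ?_, fun i => ?_⟩
        · simp only [Pi.add_apply, add_mul]
          rw [Finset.sum_add_distrib, hz₁ c hc, hz₂ c hc, add_zero]
        · simp only [Pi.add_apply]
          push_cast
          rw [he₁ i, he₂ i, hΦadd]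
      smul_mem' := by
        rintro k w ⟨z, hz, he⟩
        refine ⟨(k : F) • z, fun c hc => ?_, fun i => ?_⟩
        · simp only [Pi.smul_apply, smul_eq_mul, mul_assoc]
          rw [← Finset.mul_sum, hz c hc, mul_zero]
        · have : ((k • w) i : F) = (k : F) * (w i : F) := rfl
          rw [this, he i, Pi.smul_apply, smul_eq_mul, hΦKmul (k : F) k.2] } with hT
  ext v
  simp only [Set.mem_setOf_eq]
  constructor
  · rintro ⟨hvK, hvperp⟩
    set v' : Fin n → ↥K := fun i => ⟨v i, hvK i⟩ with hv'
    have hvT : v' ∈ T := by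
      by_contra hvT
      obtain ⟨u, hu1, hu2⟩ := delsarte_sep T hvT
      set u' : Fin n → F := fun i => (u i : F) with hu'
      have hA : ∀ z : Fin n → F, (∀ c ∈ C, ∑ i, z i * c i = 0) →
          Φ (∑ i, u' i * z i) = 0 := by
        intro z hz
        have hw : (fun i => (⟨Φ (z i), hΦK _⟩ : ↥K)) ∈ T := ⟨z, hz, fun i => rfl⟩
        have h0 := hu1 _ hw
        have h1 : ((∑ i, u i * (⟨Φ (z i), hΦK _⟩ : ↥K) : ↥K) : F)
            = ∑ i, u' i * Φ (z i) := by push_cast; rfl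
        rw [hΦsum]
        calc ∑ i, Φ (u' i * z i) = ∑ i, u' i * Φ (z i) :=
              Finset.sum_congr rfl fun i _ => hΦKmul (u' i) (u i).2 (z i)
          _ = 0 := by rw [← h1, h0, ZeroMemClass.coe_zero]
      have hB : u' ∈ C := by
        by_contra hB
        obtain ⟨w, hw1, hw2⟩ := delsarte_sep C hB
        set a : F := ∑ i, w i * u' i with ha
        obtain ⟨x, hx⟩ := hΦne
        apply hx
        have hz : ∀ c ∈ C, ∑ i, ((x * a⁻¹) • w) i * c i = 0 := by
          intro c hc
          have hterm : ∀ i, ((x * a⁻¹) • w) i * c i = (x * a⁻¹) * (w i * c i) := by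
            intro i
            rw [Pi.smul_apply, smul_eq_mul, mul_assoc]
          rw [Finset.sum_congr rfl fun i _ => hterm i, ← Finset.mul_sum, hw1 c hc, mul_zero]
        have := hA ((x * a⁻¹) • w) hz
        have hsum : ∑ i, u' i * ((x * a⁻¹) • w) i = x := by
          simp only [Pi.smul_apply, smul_eq_mul]
          have : ∀ i, u' i * (x * a⁻¹ * w i) = x * a⁻¹ * (w i * u' i) := by
            intro i; ring
          rw [Finset.sum_congr rfl fun i _ => this i, ← Finset.mul_sum, ← ha,
            mul_assoc, inv_mul_cancel₀ hw2, mul_one]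
        rwa [hsum] at this
      have h0 := hvperp u' hB (fun i => (u i).2)
      apply hu2
      have h1 : ((∑ i, u i * v' i : ↥K) : F) = ∑ i, u' i * v i := by push_cast; rfl
      have h2 : ∑ i, u' i * v i = 0 := by
        rw [← h0]; exact Finset.sum_congr rfl fun i _ => mul_comm _ _
      exact Subtype.coe_injective
        (show ((∑ i, u i * v' i : ↥K) : F) = ((0 : ↥K) : F) by
          rw [h1, h2, ZeroMemClass.coe_zero])
    obtain ⟨z, hz, he⟩ := hvT
    refine ⟨z, hz, fun i => ?_⟩
    rw [hΦeq (z i)]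
    exact he i
  · rintro ⟨z, hz, hv⟩
    have hv2 : ∀ i, v i = Φ (z i) := fun i => by rw [hv i, hΦeq]
    refine ⟨fun i => by rw [hv2 i]; exact hΦK _, fun c hc hcK => ?_⟩
    have h1 : ∀ i, v i * c i = Φ (z i * c i) := by
      intro i
      rw [hv2 i, mul_comm (z i) (c i), hΦKmul (c i) (hcK i), mul_comm]
    rw [Finset.sum_congr rfl fun i _ => h1 i, ← hΦsum, hz c hc, hΦzero]
end

section
/- Let C_1 ⊆ F^{n_1} and C_2 ⊆ F^{n_2} be linear codes over a field F. Then the dual of the tensor product code satisfies (C_1 ⊗ C_2)^⊥ = C_1^⊥ ⊗ F^{n_2} + F^{n_1} ⊗ C_2^⊥. -/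
/-!
Read `z : Fin n₁ × Fin n₂ → F` as a matrix `M`; then `z ⊥ c₁ ⊗ c₂` says `c₁ ⬝ M c₂ = 0`.
Pick a matrix `P` projecting onto `C₂` and split `M = M P + M (1 - P)`. For `z ⊥ C₁ ⊗ C₂`
the columns `M (P eⱼ)` of `M P` are orthogonal to `C₁`, while the rows of `M (1 - P)` are
orthogonal to `C₂` because `(1 - P) c₂ = 0`. The reverse inclusion is the factorisation
`(a ⊗ b) ⬝ (c ⊗ d) = (a ⬝ c) (b ⬝ d)`.
-/

open Finset

def dualCode {F : Type} [Field F] {ι : Type} [Fintype ι] (C : Submodule F (ι → F)) :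
    Submodule F (ι → F) where
  carrier := {z | ∀ c ∈ C, ∑ i, z i * c i = 0}
  add_mem' := by
    intro a b ha hb c hc
    simp only [Set.mem_setOf_eq] at *
    simp [Pi.add_apply, add_mul, Finset.sum_add_distrib, ha c hc, hb c hc]
  zero_mem' := by intro c hc; simp
  smul_mem' := by
    intro r z hz c hc
    simp only [Set.mem_setOf_eq] at *
    simp [Pi.smul_apply, smul_eq_mul, mul_assoc, ← Finset.mul_sum, hz c hc]

def tensCode {F : Type} [Field F] {n₁ n₂ : ℕ} (C₁ : Submodule F (Fin n₁ → F))
    (C₂ : Submodule F (Fin n₂ → F)) : Submodule F (Fin n₁ × Fin n₂ → F) :=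
  Submodule.span F {w | ∃ c₁ ∈ C₁, ∃ c₂ ∈ C₂, w = fun p => c₁ p.1 * c₂ p.2}

open Matrix

variable {F : Type} [Field F]

theorem mem_dualCode_iff {ι : Type} [Fintype ι] {C : Submodule F (ι → F)} {z : ι → F} :
    z ∈ dualCode C ↔ ∀ c ∈ C, z ⬝ᵥ c = 0 :=
  Iff.rfl

theorem mem_dualCode_span_iff {ι : Type} [Fintype ι] {S : Set (ι → F)} {z : ι → F} :
    z ∈ dualCode (Submodule.span F S) ↔ ∀ s ∈ S, z ⬝ᵥ s = 0 := by
  change Submodule.span F S ≤ LinearMap.ker (dotProductBilin F F z) ↔ _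
  rw [Submodule.span_le]
  rfl

theorem dotProduct_pureTensor {ι κ : Type} [Fintype ι] [Fintype κ]
    (a c : ι → F) (b d : κ → F) :
    (fun p : ι × κ => a p.1 * b p.2) ⬝ᵥ (fun p => c p.1 * d p.2) = (a ⬝ᵥ c) * (b ⬝ᵥ d) := by
  simp only [dotProduct, Fintype.sum_prod_type, Finset.sum_mul_sum]
  exact Finset.sum_congr rfl fun _ _ => Finset.sum_congr rfl fun _ _ => by ring

theorem dotProduct_pureTensor_right {ι κ : Type} [Fintype ι] [Fintype κ]
    (z : ι × κ → F) (c : ι → F) (d : κ → F) :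
    z ⬝ᵥ (fun p => c p.1 * d p.2) = c ⬝ᵥ (of fun i j => z (i, j)) *ᵥ d := by
  simp only [dotProduct, mulVec, of_apply, Fintype.sum_prod_type, Finset.mul_sum]
  exact Finset.sum_congr rfl fun _ _ => Finset.sum_congr rfl fun _ _ => by ring

theorem exists_mulVec_projection {ι : Type} [Fintype ι] [DecidableEq ι]
    (C : Submodule F (ι → F)) :
    ∃ P : Matrix ι ι F, (∀ x, P *ᵥ x ∈ C) ∧ ∀ c ∈ C, P *ᵥ c = c := by
  obtain ⟨D, hCD⟩ := C.exists_isCompl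
  refine ⟨LinearMap.toMatrix' (C.projection D hCD), fun x => ?_, fun c hc => ?_⟩
  · rw [LinearMap.toMatrix'_mulVec]
    exact Submodule.projection_apply_mem hCD x
  · rw [LinearMap.toMatrix'_mulVec]
    exact Submodule.projection_apply_of_mem_left hCD hc

section tensCode

variable {n₁ n₂ : ℕ}

theorem mem_tensCode_top_of_col_mem {D₁ : Submodule F (Fin n₁ → F)}
    {M : Matrix (Fin n₁) (Fin n₂) F} (h : ∀ j, M.col j ∈ D₁) :
    (fun p => M p.1 p.2) ∈ tensCode D₁ ⊤ := by
  have hM : (fun p => M p.1 p.2) =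
      ∑ j, fun p : Fin n₁ × Fin n₂ => M.col j p.1 * (Pi.single j 1 : Fin n₂ → F) p.2 := by
    ext p
    simp [Finset.sum_apply, Pi.single_apply]
  rw [hM]
  exact Submodule.sum_mem _ fun j _ =>
    Submodule.subset_span ⟨_, h j, _, Submodule.mem_top, rfl⟩

theorem mem_tensCode_top_of_row_mem {D₂ : Submodule F (Fin n₂ → F)}
    {M : Matrix (Fin n₁) (Fin n₂) F} (h : ∀ i, M i ∈ D₂) :
    (fun p => M p.1 p.2) ∈ tensCode ⊤ D₂ := by
  have hM : (fun p => M p.1 p.2) =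
      ∑ i, fun p : Fin n₁ × Fin n₂ => (Pi.single i 1 : Fin n₁ → F) p.1 * M i p.2 := by
    ext p
    simp [Finset.sum_apply, Pi.single_apply]
  rw [hM]
  exact Submodule.sum_mem _ fun i _ =>
    Submodule.subset_span ⟨_, Submodule.mem_top, _, h i, rfl⟩

theorem tensCode_le_dualCode_tensCode {C₁ D₁ : Submodule F (Fin n₁ → F)}
    {C₂ D₂ : Submodule F (Fin n₂ → F)}
    (h : ∀ d₁ ∈ D₁, ∀ d₂ ∈ D₂, ∀ c₁ ∈ C₁, ∀ c₂ ∈ C₂, (d₁ ⬝ᵥ c₁) * (d₂ ⬝ᵥ c₂) = 0) :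
    tensCode D₁ D₂ ≤ dualCode (tensCode C₁ C₂) := by
  rw [tensCode, Submodule.span_le]
  rintro _ ⟨d₁, hd₁, d₂, hd₂, rfl⟩
  rw [SetLike.mem_coe, tensCode, mem_dualCode_span_iff]
  rintro _ ⟨c₁, hc₁, c₂, hc₂, rfl⟩
  rw [dotProduct_pureTensor]
  exact h d₁ hd₁ d₂ hd₂ c₁ hc₁ c₂ hc₂

theorem dualCode_tensCode_le (C₁ : Submodule F (Fin n₁ → F)) (C₂ : Submodule F (Fin n₂ → F)) :
    dualCode (tensCode C₁ C₂) ≤ tensCode (dualCode C₁) ⊤ ⊔ tensCode ⊤ (dualCode C₂) := by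
  intro z hz
  obtain ⟨P, hP_mem, hP_fix⟩ := exists_mulVec_projection C₂
  set M : Matrix (Fin n₁) (Fin n₂) F := of fun i j => z (i, j) with hM
  have hcol : ∀ j, (M * P).col j ∈ dualCode C₁ := by
    refine fun j => mem_dualCode_iff.mpr fun c₁ hc₁ => ?_
    rw [← mulVec_single_one, ← mulVec_mulVec, dotProduct_comm, hM,
      ← dotProduct_pureTensor_right]
    exact hz _ (Submodule.subset_span ⟨c₁, hc₁, _, hP_mem _, rfl⟩)
  have hrow : ∀ i, (M * (1 - P) : Matrix (Fin n₁) (Fin n₂) F) i ∈ dualCode C₂ := by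
    refine fun i => mem_dualCode_iff.mpr fun c₂ hc₂ => ?_
    rw [mul_apply_eq_vecMul, ← dotProduct_mulVec, sub_mulVec, one_mulVec, hP_fix c₂ hc₂,
      sub_self, dotProduct_zero]
  have hz_split : z = (fun p => (M * P) p.1 p.2) +
      fun p => (M * (1 - P) : Matrix (Fin n₁) (Fin n₂) F) p.1 p.2 := by
    ext p
    rw [Pi.add_apply, ← Matrix.add_apply, ← Matrix.mul_add, add_sub_cancel, Matrix.mul_one]
    rfl
  rw [hz_split]
  exact Submodule.add_mem_sup (mem_tensCode_top_of_col_mem hcol)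
    (mem_tensCode_top_of_row_mem hrow)

end tensCode

/-- For linear codes `C₁ ⊆ F^{n₁}`, `C₂ ⊆ F^{n₂}` over a field `F`,
`(C₁ ⊗ C₂)^⊥ = C₁^⊥ ⊗ F^{n₂} + F^{n₁} ⊗ C₂^⊥`. -/
theorem dual_tensor_code (F : Type) [Field F] (n₁ n₂ : ℕ)
    (C₁ : Submodule F (Fin n₁ → F)) (C₂ : Submodule F (Fin n₂ → F)) :
    dualCode (tensCode C₁ C₂) = tensCode (dualCode C₁) ⊤ ⊔ tensCode ⊤ (dualCode C₂) := by
  refine le_antisymm (dualCode_tensCode_le C₁ C₂) (sup_le ?_ ?_) <;>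
    refine tensCode_le_dualCode_tensCode fun d₁ hd₁ d₂ hd₂ c₁ hc₁ c₂ hc₂ => ?_
  · rw [mem_dualCode_iff.mp hd₁ c₁ hc₁, zero_mul]
  · rw [mem_dualCode_iff.mp hd₂ c₂ hc₂, mul_zero]
end

section
/- Let C_1 ⊆ F^{n_1} and C_2 ⊆ F^{n_2} be nonzero proper linear codes over a field F with minimum Hamming distances d_1 and d_2. Then the minimum Hamming distance of the code C_1 ⊗ F^{n_2} + F^{n_1} ⊗ C_2 equals min(d_1, d_2). -/
open Finset

/-- The minimum Hamming distance of a (nonzero) linear code: the least Hamming weight of a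
nonzero codeword. -/
noncomputable def minDist {F : Type} [Field F] [DecidableEq F] {ι : Type} [Fintype ι]
    (C : Submodule F (ι → F)) : ℕ :=
  sInf {w | ∃ c ∈ C, c ≠ 0 ∧ hammingNorm c = w}

section Aux

variable {F : Type} [Field F] [DecidableEq F] {n₁ n₂ : ℕ}

/-- Standard basis vector. -/
def ev {F : Type} [Zero F] [One F] {n : ℕ} (j : Fin n) : Fin n → F := Pi.single j 1

lemma ev_apply {n : ℕ} (j x : Fin n) : (ev j : Fin n → F) x = if x = j then 1 else 0 := by
  simp [ev, Pi.single_apply]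

/-- Hamming norm of a matrix is the sum of Hamming norms of its rows. -/
lemma hn_sum_rows (M : Fin n₁ × Fin n₂ → F) :
    hammingNorm M = ∑ i, hammingNorm (fun j => M (i, j)) := by
  simp only [hammingNorm, Finset.card_filter]
  rw [Fintype.sum_prod_type]

/-- Columns of elements of `tensCode C₁ ⊤` lie in `C₁`. -/
lemma cols_mem {C₁ : Submodule F (Fin n₁ → F)} {M : Fin n₁ × Fin n₂ → F}
    (h : M ∈ tensCode C₁ ⊤) (j : Fin n₂) : (fun i => M (i, j)) ∈ C₁ := by
  have hle : tensCode C₁ (⊤ : Submodule F (Fin n₂ → F)) ≤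
      Submodule.comap (LinearMap.funLeft F F (fun i : Fin n₁ => (i, j))) C₁ := by
    apply Submodule.span_le.2
    rintro w ⟨c₁, hc₁, c₂, -, rfl⟩
    simp only [SetLike.mem_coe, Submodule.mem_comap]
    have : (LinearMap.funLeft F F (fun i : Fin n₁ => (i, j)))
        (fun p => c₁ p.1 * c₂ p.2) = c₂ j • c₁ := by
      funext i; simp [LinearMap.funLeft, mul_comm]
    rw [this]
    exact C₁.smul_mem _ hc₁
  exact hle h

/-- Rows of elements of `tensCode ⊤ C₂` lie in `C₂`. -/
lemma rows_mem {C₂ : Submodule F (Fin n₂ → F)} {M : Fin n₁ × Fin n₂ → F}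
    (h : M ∈ tensCode ⊤ C₂) (i : Fin n₁) : (fun j => M (i, j)) ∈ C₂ := by
  have hle : tensCode (⊤ : Submodule F (Fin n₁ → F)) C₂ ≤
      Submodule.comap (LinearMap.funLeft F F (fun j : Fin n₂ => (i, j))) C₂ := by
    apply Submodule.span_le.2
    rintro w ⟨c₁, -, c₂, hc₂, rfl⟩
    simp only [SetLike.mem_coe, Submodule.mem_comap]
    have : (LinearMap.funLeft F F (fun j : Fin n₂ => (i, j)))
        (fun p => c₁ p.1 * c₂ p.2) = c₁ i • c₂ := by
      funext j; simp [LinearMap.funLeft]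
    rw [this]
    exact C₂.smul_mem _ hc₂
  exact hle h

lemma minDist_spec {ι : Type} [Fintype ι] {C : Submodule F (ι → F)} (h : C ≠ ⊥) :
    ∃ c ∈ C, c ≠ 0 ∧ hammingNorm c = minDist C := by
  obtain ⟨c, hc, hc0⟩ := (Submodule.ne_bot_iff C).1 h
  have hne : {w | ∃ c ∈ C, c ≠ 0 ∧ hammingNorm c = w}.Nonempty :=
    ⟨hammingNorm c, c, hc, hc0, rfl⟩
  exact Nat.sInf_mem hne

lemma minDist_le {ι : Type} [Fintype ι] {C : Submodule F (ι → F)} {c : ι → F}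
    (hc : c ∈ C) (hc0 : c ≠ 0) : minDist C ≤ hammingNorm c :=
  Nat.sInf_le ⟨c, hc, hc0, rfl⟩

end Aux

/-- For nonzero proper linear codes `C₁ ⊆ F^{n₁}`, `C₂ ⊆ F^{n₂}` with minimum
distances `d₁, d₂`, the code `C₁ ⊗ F^{n₂} + F^{n₁} ⊗ C₂` has minimum distance
`min(d₁, d₂)`. -/
theorem minDist_sum_tensor (F : Type) [Field F] [DecidableEq F] (n₁ n₂ : ℕ)
    (C₁ : Submodule F (Fin n₁ → F)) (C₂ : Submodule F (Fin n₂ → F))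
    (h₁b : C₁ ≠ ⊥) (h₁t : C₁ ≠ ⊤) (h₂b : C₂ ≠ ⊥) (h₂t : C₂ ≠ ⊤)
    (d₁ d₂ : ℕ) (hd₁ : minDist C₁ = d₁) (hd₂ : minDist C₂ = d₂) :
    minDist (tensCode C₁ ⊤ ⊔ tensCode ⊤ C₂) = min d₁ d₂ := by
  classical
  obtain ⟨a, ha, ha0, han⟩ := minDist_spec h₁b
  obtain ⟨b, hb, hb0, hbn⟩ := minDist_spec h₂b
  rw [hd₁] at han; rw [hd₂] at hbn
  obtain ⟨i₀, hi₀⟩ : ∃ i, a i ≠ 0 := by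
    by_contra h; push_neg at h; exact ha0 (funext h)
  obtain ⟨j₀, hj₀⟩ : ∃ j, b j ≠ 0 := by
    by_contra h; push_neg at h; exact hb0 (funext h)
  -- norm of a pure tensor with a single basis vector
  have key1 : ∀ (c : Fin n₁ → F) (j : Fin n₂),
      hammingNorm (fun p : Fin n₁ × Fin n₂ => c p.1 * (ev j : Fin n₂ → F) p.2) = hammingNorm c := by
    intro c j
    rw [hn_sum_rows]
    simp only [hammingNorm]
    rw [Finset.card_filter]
    apply Finset.sum_congr rfl
    intro i _
    by_cases hci : c i = 0
    · simp [hci]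
    · rw [if_pos hci]
      have : (Finset.univ.filter fun x : Fin n₂ => c i * (ev j : Fin n₂ → F) x ≠ 0) = {j} := by
        ext x
        simp [ev_apply, hci]
      rw [this, Finset.card_singleton]
  have key2 : ∀ (c : Fin n₂ → F) (i : Fin n₁),
      hammingNorm (fun p : Fin n₁ × Fin n₂ => (ev i : Fin n₁ → F) p.1 * c p.2) = hammingNorm c := by
    intro c i
    rw [hn_sum_rows]
    rw [Fintype.sum_eq_single i]
    · simp [ev_apply]
    · intro x hx
      simp [ev_apply, hx, hammingNorm]
  apply le_antisymm
  · -- upper bound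
    rcases le_total d₁ d₂ with h | h
    · rw [min_eq_left h]
      have hmem : (fun p : Fin n₁ × Fin n₂ => a p.1 * (ev j₀ : Fin n₂ → F) p.2) ∈
          tensCode C₁ ⊤ ⊔ tensCode ⊤ C₂ :=
        Submodule.mem_sup_left (Submodule.subset_span ⟨a, ha, (ev j₀ : Fin n₂ → F),
          trivial, rfl⟩)
      have hne : (fun p : Fin n₁ × Fin n₂ => a p.1 * (ev j₀ : Fin n₂ → F) p.2) ≠ 0 := by
        intro h0
        have := congrFun h0 (i₀, j₀)
        simp [ev_apply] at this
        exact hi₀ this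
      calc minDist (tensCode C₁ ⊤ ⊔ tensCode ⊤ C₂) ≤
          hammingNorm (fun p : Fin n₁ × Fin n₂ => a p.1 * (ev j₀ : Fin n₂ → F) p.2) :=
            minDist_le hmem hne
        _ = d₁ := by rw [key1, han]
    · rw [min_eq_right h]
      have hmem : (fun p : Fin n₁ × Fin n₂ => (ev i₀ : Fin n₁ → F) p.1 * b p.2) ∈
          tensCode C₁ ⊤ ⊔ tensCode ⊤ C₂ :=
        Submodule.mem_sup_right (Submodule.subset_span ⟨(ev i₀ : Fin n₁ → F), trivial,
          b, hb, rfl⟩)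
      have hne : (fun p : Fin n₁ × Fin n₂ => (ev i₀ : Fin n₁ → F) p.1 * b p.2) ≠ 0 := by
        intro h0
        have := congrFun h0 (i₀, j₀)
        simp [ev_apply] at this
        exact hj₀ this
      calc minDist (tensCode C₁ ⊤ ⊔ tensCode ⊤ C₂) ≤
          hammingNorm (fun p : Fin n₁ × Fin n₂ => (ev i₀ : Fin n₁ → F) p.1 * b p.2) :=
            minDist_le hmem hne
        _ = d₂ := by rw [key2, hbn]
  · -- lower bound
    apply le_csInf
    · exact ⟨hammingNorm (fun p : Fin n₁ × Fin n₂ => a p.1 * (ev j₀ : Fin n₂ → F) p.2),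
        (fun p : Fin n₁ × Fin n₂ => a p.1 * (ev j₀ : Fin n₂ → F) p.2),
        Submodule.mem_sup_left (Submodule.subset_span ⟨a, ha, (ev j₀ : Fin n₂ → F),
          trivial, rfl⟩),
        (by intro h0; have := congrFun h0 (i₀, j₀); simp [ev_apply] at this
            exact hi₀ this), rfl⟩
    rintro w ⟨M, hM, hM0, rfl⟩
    obtain ⟨A, hA, B, hB, rfl⟩ := Submodule.mem_sup.1 hM
    set M := A + B with hMdef
    -- rows of M
    by_cases hrows : ∀ i, (fun j => M (i, j)) ∈ C₂
    · -- all rows in C₂; some row is nonzero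
      obtain ⟨i, hi⟩ : ∃ i, (fun j => M (i, j)) ≠ 0 := by
        by_contra h; push_neg at h
        exact hM0 (funext fun p => congrFun (h p.1) p.2)
      have h1 : d₂ ≤ hammingNorm (fun j => M (i, j)) := hd₂ ▸ minDist_le (hrows i) hi
      have h2 : hammingNorm (fun j => M (i, j)) ≤ hammingNorm M := by
        rw [hn_sum_rows]
        exact Finset.single_le_sum (f := fun i => hammingNorm (fun j => M (i, j)))
          (fun _ _ => Nat.zero_le _) (Finset.mem_univ i)
      exact le_trans (min_le_right d₁ d₂) (le_trans h1 h2)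
    · push_neg at hrows
      obtain ⟨i₁, hi₁⟩ := hrows
      -- separating functional
      have hq : C₂.mkQ (fun j => M (i₁, j)) ≠ 0 := by
        rwa [Submodule.mkQ_apply, ne_eq, Submodule.Quotient.mk_eq_zero]
      obtain ⟨ψ, hψ⟩ : ∃ ψ : Module.Dual F ((Fin n₂ → F) ⧸ C₂),
          ψ (C₂.mkQ (fun j => M (i₁, j))) ≠ 0 := by
        by_contra h; push_neg at h
        exact hq ((Module.forall_dual_apply_eq_zero_iff F _).1 h)
      set φ : (Fin n₂ → F) →ₗ[F] F := ψ.comp C₂.mkQ with hφdef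
      have hφC₂ : ∀ c ∈ C₂, φ c = 0 := by
        intro c hc
        simp [hφdef, (Submodule.Quotient.mk_eq_zero C₂).2 hc]
      -- v i = φ (row i of M) = φ (row i of A) ∈ C₁
      set v : Fin n₁ → F := fun i => φ (fun j => M (i, j)) with hvdef
      have hvA : ∀ i, v i = φ (fun j => A (i, j)) := by
        intro i
        have : (fun j => M (i, j)) = (fun j => A (i, j)) + (fun j => B (i, j)) := by
          funext j; simp [hMdef]
        rw [hvdef]
        simp only [this, map_add, hφC₂ _ (rows_mem hB i), add_zero]
      have hvC₁ : v ∈ C₁ := by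
        have hval : v = ∑ j, φ (ev j : Fin n₂ → F) • (fun i => A (i, j)) := by
          funext i
          rw [hvA i]
          have hrow : (fun j => A (i, j)) = ∑ j, Pi.single j (A (i, j)) := by
            rw [Finset.univ_sum_single (f := fun j => A (i, j))]
          rw [hrow, map_sum]
          rw [Finset.sum_apply]
          apply Finset.sum_congr rfl
          intro j _
          have : Pi.single j (A (i, j)) = A (i, j) • (ev j : Fin n₂ → F) := by
            funext x; simp [ev, Pi.single_apply, mul_ite]
          rw [this, map_smul]
          simp [mul_comm]
        rw [hval]
        exact Submodule.sum_mem _ fun j _ => Submodule.smul_mem _ _ (cols_mem hA j)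
      have hv0 : v ≠ 0 := by
        intro h
        apply hψ
        have := congrFun h i₁
        simpa [hvdef, hφdef] using this
      have h1 : d₁ ≤ hammingNorm v := hd₁ ▸ minDist_le hvC₁ hv0
      have h2 : hammingNorm v ≤ hammingNorm M := by
        rw [hn_sum_rows]
        calc hammingNorm v = ∑ i ∈ Finset.univ.filter (fun i => v i ≠ 0), 1 := by
              simp [hammingNorm, Finset.card_filter]
          _ ≤ ∑ i ∈ Finset.univ.filter (fun i => v i ≠ 0),
                hammingNorm (fun j => M (i, j)) := by
              apply Finset.sum_le_sum
              intro i hi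
              rw [Finset.mem_filter] at hi
              have hrow : (fun j => M (i, j)) ≠ 0 := by
                intro h
                apply hi.2
                simp [hvdef, h]
              exact Nat.one_le_iff_ne_zero.2 (hammingNorm_ne_zero_iff.2 hrow)
          _ ≤ ∑ i, hammingNorm (fun j => M (i, j)) :=
              Finset.sum_le_sum_of_subset (Finset.filter_subset _ _)
      exact le_trans (min_le_left d₁ d₂) (le_trans h1 h2)
end

section
/- Let S = {s_1, ..., s_n} ⊆ F_{q^t}^* be a P-independent set (the least common left multiple of {X − s_i} in F_{q^t}[X; θ] has degree n) such that at most two elements of S lie in each θ-conjugacy class. Then S^{-1} = {s_1^{-1}, ..., s_n^{-1}} is also P-independent. -/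
/-!
Evaluate `f ∈ F[X;θ]` at `a` as `f(a) = ∑ fₖ a θ(a) ⋯ θᵏ⁻¹(a)`: this is the remainder of `f` on
right division by `X - a`, and `h (X - u)` evaluates at `a` to `(a - u) h(a')`, where
`a' = θ(a - u) a (a - u)⁻¹` is θ-conjugate to `a`. So if `f = h (X - v₀) ≠ 0` vanishes at distinct
`v₀, …, vₘ` with at most two in each θ-conjugacy class, then `h` vanishes at `v₁', …, vₘ'`, which
again have at most two per class, and are distinct: a collision `vᵢ' = vⱼ'` forces `v₀` into the
class of `vᵢ` and `vⱼ`. By induction `deg f ≥ m + 1`. Inversion maps θ-conjugacy classes onto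
θ-conjugacy classes, so `S⁻¹` inherits the hypothesis on `S`.
-/

open Polynomial

/-- `s₁, …, sₙ` are P-independent in `F[X;θ]`: the least common left multiple of the
`X − sⱼ` has degree `n`; equivalently every nonzero common left multiple of the `X − sⱼ`
has degree at least `n`. -/
def PIndep {F : Type} [Field F] (θ : F ≃+* F) {n : ℕ} (s : Fin n → F) : Prop :=
  ∀ f : Polynomial F, f ≠ 0 →
    (∀ j, ∃ h, f = skewMul θ h (Polynomial.X - Polynomial.C (s j))) → n ≤ f.natDegree

section SkewPolynomial

variable {F : Type} [Field F] (θ : F ≃+* F)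

lemma skewMul_zero_left (g : F[X]) : skewMul θ 0 g = 0 := sum_zero_index _

lemma skewMul_add_left (f₁ f₂ g : F[X]) :
    skewMul θ (f₁ + f₂) g = skewMul θ f₁ g + skewMul θ f₂ g :=
  sum_add_index _ _ _ (fun _ => by simp) fun _ _ _ => by simp [add_mul]

lemma skewMul_monomial_X_sub_C (n : ℕ) (c u : F) :
    skewMul θ (monomial n c) (X - C u) = monomial (n + 1) c - monomial n (c * (θ ^ n) u) := by
  rw [skewMul, sum_monomial_index _ _ (by simp)]
  simp only [Polynomial.map_sub, map_X, map_C, RingEquiv.coe_toRingHom, ← C_mul_X_pow_eq_monomial,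
    C_mul, pow_succ]
  ring

lemma coeff_skewMul_X_sub_C_succ (h : F[X]) (u : F) (k : ℕ) :
    (skewMul θ h (X - C u)).coeff (k + 1) = h.coeff k - (θ ^ (k + 1)) u * h.coeff (k + 1) := by
  induction h using Polynomial.induction_on' with
  | add p q hp hq => rw [skewMul_add_left, coeff_add, hp, hq, coeff_add, coeff_add]; ring
  | monomial n c =>
    simp only [skewMul_monomial_X_sub_C, coeff_sub, coeff_monomial, add_left_inj]
    split_ifs <;> subst_vars <;> simp_all [mul_comm]

lemma natDegree_lt_natDegree_skewMul_X_sub_C {h : F[X]} (hh : h ≠ 0) (u : F) :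
    h.natDegree < (skewMul θ h (X - C u)).natDegree := by
  refine Nat.lt_of_succ_le (le_natDegree_of_ne_zero ?_)
  rw [coeff_skewMul_X_sub_C_succ, coeff_eq_zero_of_natDegree_lt (Nat.lt_succ_self _), mul_zero,
    sub_zero]
  exact leadingCoeff_ne_zero.2 hh

lemma exists_eq_skewMul_X_sub_C_add_C (u : F) (f : F[X]) :
    ∃ h r, f = skewMul θ h (X - C u) + C r := by
  induction f using Polynomial.induction_on' with
  | add p q hp hq =>
    obtain ⟨h₁, r₁, rfl⟩ := hp
    obtain ⟨h₂, r₂, rfl⟩ := hq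
    exact ⟨h₁ + h₂, r₁ + r₂, by rw [skewMul_add_left, C_add]; ring⟩
  | monomial n c =>
    induction n generalizing c with
    | zero => exact ⟨0, c, by simp [skewMul_zero_left]⟩
    | succ n ih =>
      obtain ⟨h, r, hr⟩ := ih (c * (θ ^ n) u)
      refine ⟨monomial n c + h, r, ?_⟩
      rw [skewMul_add_left, skewMul_monomial_X_sub_C, add_assoc, ← hr]
      ring

noncomputable def skewNorm (a : F) (k : ℕ) : F := ∏ i ∈ Finset.range k, (θ ^ i) a

@[simp] lemma skewNorm_zero (a : F) : skewNorm θ a 0 = 1 := Finset.prod_range_zero _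

lemma skewNorm_succ (a : F) (k : ℕ) : skewNorm θ a (k + 1) = skewNorm θ a k * (θ ^ k) a :=
  Finset.prod_range_succ _ _

lemma skewNorm_conj {c : F} (hc : c ≠ 0) (a : F) (k : ℕ) :
    skewNorm θ (θ c * a * c⁻¹) k = (θ ^ k) c * skewNorm θ a k * c⁻¹ := by
  induction k with
  | zero => simp [hc]
  | succ k ih =>
    have hck : (θ ^ k) c ≠ 0 := (_root_.map_ne_zero _).2 hc
    rw [skewNorm_succ, ih, skewNorm_succ, map_mul, map_mul, map_inv₀, pow_succ,
      RingAut.mul_apply]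
    field_simp

noncomputable def skewEval (a : F) (f : F[X]) : F := f.sum fun k c => c * skewNorm θ a k

lemma skewEval_add (a : F) (f g : F[X]) : skewEval θ a (f + g) = skewEval θ a f + skewEval θ a g :=
  sum_add_index _ _ _ (fun _ => zero_mul _) fun _ _ _ => add_mul _ _ _

lemma skewEval_monomial (a c : F) (n : ℕ) : skewEval θ a (monomial n c) = c * skewNorm θ a n :=
  sum_monomial_index _ _ (zero_mul _)

lemma skewEval_C (a c : F) : skewEval θ a (C c) = c := by
  simpa using skewEval_monomial θ a c 0

lemma skewEval_skewMul_X_sub_C (a u : F) (h : F[X]) :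
    skewEval θ a (skewMul θ h (X - C u))
      = (a - u) * skewEval θ (θ (a - u) * a * (a - u)⁻¹) h := by
  induction h using Polynomial.induction_on' with
  | add p q hp hq => rw [skewMul_add_left, skewEval_add, skewEval_add, hp, hq, mul_add]
  | monomial n c =>
    rw [skewMul_monomial_X_sub_C, sub_eq_add_neg, ← monomial_neg, skewEval_add, skewEval_monomial,
      skewEval_monomial, skewEval_monomial, skewNorm_succ]
    rcases eq_or_ne a u with rfl | hau
    · simp only [sub_self, map_zero, zero_mul]
      ring
    · rw [skewNorm_conj θ (sub_ne_zero.2 hau), map_sub]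
      field_simp
      ring

lemma skewEval_eq_zero_iff {u : F} {f : F[X]} :
    skewEval θ u f = 0 ↔ ∃ h, f = skewMul θ h (X - C u) := by
  constructor
  · intro hf
    obtain ⟨h, r, rfl⟩ := exists_eq_skewMul_X_sub_C_add_C θ u f
    rw [skewEval_add, skewEval_skewMul_X_sub_C, sub_self, zero_mul, zero_add, skewEval_C] at hf
    exact ⟨h, by rw [hf, C_0, add_zero]⟩
  · rintro ⟨h, rfl⟩
    rw [skewEval_skewMul_X_sub_C, sub_self, zero_mul]

end SkewPolynomial

section SkewConj

variable {F : Type} [Field F] (θ : F ≃+* F)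

def SkewConj (a b : F) : Prop := ∃ c : F, c ≠ 0 ∧ b = θ c * a * c⁻¹

variable {θ}

lemma SkewConj.refl (a : F) : SkewConj θ a a := ⟨1, one_ne_zero, by simp⟩

lemma SkewConj.symm {a b : F} (h : SkewConj θ a b) : SkewConj θ b a := by
  obtain ⟨c, hc, rfl⟩ := h
  have : θ c ≠ 0 := (map_ne_zero θ).2 hc
  exact ⟨c⁻¹, inv_ne_zero hc, by rw [map_inv₀]; field_simp⟩

lemma SkewConj.trans {a b d : F} (hab : SkewConj θ a b) (hbd : SkewConj θ b d) :
    SkewConj θ a d := by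
  obtain ⟨c, hc, rfl⟩ := hab
  obtain ⟨e, he, rfl⟩ := hbd
  exact ⟨e * c, mul_ne_zero he hc, by rw [map_mul, mul_inv]; ring⟩

lemma SkewConj.inv {a b : F} (h : SkewConj θ a b) : SkewConj θ a⁻¹ b⁻¹ := by
  obtain ⟨c, hc, rfl⟩ := h
  exact ⟨c⁻¹, inv_ne_zero hc, by rw [map_inv₀, inv_inv, mul_inv, mul_inv, inv_inv]⟩

lemma skewConj_inv_iff {a b : F} : SkewConj θ a⁻¹ b⁻¹ ↔ SkewConj θ a b :=
  ⟨fun h => by simpa using h.inv, SkewConj.inv⟩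

lemma SkewConj.of_conj_sub_eq {u x y : F} (hxy : x ≠ y) (hy : SkewConj θ x y) (hxu : x ≠ u)
    (hyu : y ≠ u) (h : θ (x - u) * x * (x - u)⁻¹ = θ (y - u) * y * (y - u)⁻¹) :
    SkewConj θ x u := by
  obtain ⟨c, hc, rfl⟩ := hy
  have hx : x ≠ 0 := by rintro rfl; simp at hxy
  have hxu' : x - u ≠ 0 := sub_ne_zero.2 hxu
  set p := θ c * x - u * c
  have hyu' : θ c * x * c⁻¹ - u = p / c := by field_simp; ring
  have hp : p ≠ 0 := by
    have := sub_ne_zero.2 hyu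
    rw [hyu'] at this
    exact (div_ne_zero_iff.1 this).1
  have hθc : θ c ≠ 0 := (map_ne_zero θ).2 hc
  have hθxu : θ (x - u) ≠ 0 := (map_ne_zero θ).2 hxu'
  have hkey : θ p * (x - u) = p * θ (x - u) := by
    rw [hyu', map_div₀] at h
    field_simp at h
    linear_combination -h
  -- `θ(x - u)/(x - u) = θp/p`, so `l` lies in the fixed field and `c - l` conjugates `x` to `u`.
  set l := p / (x - u)
  have hl : θ l = l := by
    rw [map_div₀, div_eq_div_iff hθxu hxu']
    exact hkey
  have hcl : c - l ≠ 0 := by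
    intro hcl
    rw [sub_eq_zero] at hcl
    apply hxy
    have : l ≠ 0 := div_ne_zero hp hxu'
    rw [hcl, hl]
    field_simp
  refine ⟨c - l, hcl, ?_⟩
  rw [eq_mul_inv_iff_mul_eq₀ hcl, map_sub, hl]
  have : l * (x - u) = p := div_mul_cancel₀ p hxu'
  linear_combination this

end SkewConj

section AtMostTwoPerClass

variable {F : Type} [Field F] (θ : F ≃+* F)

def AtMostTwoPerClass {ι : Type*} (v : ι → F) : Prop :=
  ∀ i j k, SkewConj θ (v i) (v j) → SkewConj θ (v i) (v k) → i = j ∨ i = k ∨ j = k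

variable {θ} {ι κ : Type*}

lemma AtMostTwoPerClass.of_skewConj {v : ι → F} {w : κ → F} (hv : AtMostTwoPerClass θ v)
    {e : κ → ι} (he : e.Injective) (hw : ∀ k, SkewConj θ (v (e k)) (w k)) :
    AtMostTwoPerClass θ w := by
  intro i j k hij hik
  simpa only [he.eq_iff] using hv (e i) (e j) (e k) (((hw i).trans hij).trans (hw j).symm)
    (((hw i).trans hik).trans (hw k).symm)

lemma atMostTwoPerClass_inv_iff {v : ι → F} :
    AtMostTwoPerClass θ (fun i => (v i)⁻¹) ↔ AtMostTwoPerClass θ v := by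
  simp only [AtMostTwoPerClass, skewConj_inv_iff]

lemma atMostTwoPerClass_of_card_le_two [Finite ι] {v : ι → F}
    (h : ∀ a, Nat.card {i // SkewConj θ a (v i)} ≤ 2) : AtMostTwoPerClass θ v := by
  classical
  have := Fintype.ofFinite ι
  intro i j k hij hik
  by_contra! hne
  obtain ⟨hij', hik', hjk'⟩ := hne
  have hsub : ({i, j, k} : Finset ι) ⊆ Finset.univ.filter fun l => SkewConj θ (v i) (v l) := by
    intro l hl
    rw [Finset.mem_insert, Finset.mem_insert, Finset.mem_singleton] at hl
    rcases hl with rfl | rfl | rfl <;> simp [*, SkewConj.refl]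
  have h3 := Finset.card_le_card hsub
  rw [Finset.card_eq_three.2 ⟨i, j, k, hij', hik', hjk', rfl⟩, ← Fintype.card_subtype,
    ← Nat.card_eq_fintype_card] at h3
  linarith [h (v i)]

end AtMostTwoPerClass

section PIndep

variable {F : Type} [Field F] {θ : F ≃+* F}

theorem card_le_natDegree_of_skewEval_eq_zero {m : ℕ} {f : F[X]} (hf : f ≠ 0) {v : Fin m → F}
    (hv : v.Injective) (hclass : AtMostTwoPerClass θ v) (hroot : ∀ i, skewEval θ (v i) f = 0) :
    m ≤ f.natDegree := by
  induction m generalizing f with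
  | zero => exact Nat.zero_le _
  | succ m ih =>
    set u := v 0
    obtain ⟨h, rfl⟩ := (skewEval_eq_zero_iff θ).1 (hroot 0)
    have hh : h ≠ 0 := by rintro rfl; exact hf (skewMul_zero_left θ _)
    have hne : ∀ i : Fin m, v i.succ ≠ u := fun i => hv.ne (Fin.succ_ne_zero i)
    set w : Fin m → F := fun i => θ (v i.succ - u) * v i.succ * (v i.succ - u)⁻¹
    have hw : ∀ i, SkewConj θ (v i.succ) (w i) := fun i => ⟨_, sub_ne_zero.2 (hne i), rfl⟩
    have hwroot : ∀ i, skewEval θ (w i) h = 0 := fun i => by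
      have := hroot i.succ
      rwa [skewEval_skewMul_X_sub_C, mul_eq_zero, or_iff_right (sub_ne_zero.2 (hne i))] at this
    have hwinj : w.Injective := by
      intro i j hij
      by_contra hij'
      have hconj : SkewConj θ (v i.succ) (v j.succ) :=
        (hw i).trans (by rw [hij]; exact (hw j).symm)
      have hu := hconj.of_conj_sub_eq (hv.ne (Fin.succ_injective _ |>.ne hij')) (hne i) (hne j) hij
      rcases hclass i.succ j.succ 0 hconj hu with h | h | h
      exacts [hij' (Fin.succ_injective _ h), Fin.succ_ne_zero _ h, Fin.succ_ne_zero _ h]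
    exact (ih hh hwinj (hclass.of_skewConj (Fin.succ_injective _) hw) hwroot).trans_lt
      (natDegree_lt_natDegree_skewMul_X_sub_C θ hh u)

theorem pIndep_of_atMostTwoPerClass {n : ℕ} {s : Fin n → F} (hs : s.Injective)
    (hclass : AtMostTwoPerClass θ s) : PIndep θ s :=
  fun _ hf hdvd =>
    card_le_natDegree_of_skewEval_eq_zero hf hs hclass fun j => (skewEval_eq_zero_iff θ).2 (hdvd j)

end PIndep

theorem pIndep_inv_general (n : ℕ) (F : Type) [Field F] (θ : F ≃+* F)
    (s : Fin n → F) (hinj : Function.Injective s)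
    (hconj : ∀ a : F, Nat.card {j : Fin n // ∃ b : F, b ≠ 0 ∧ s j = θ b * a * b⁻¹} ≤ 2) :
    PIndep θ (fun j => (s j)⁻¹) := by
  exact pIndep_of_atMostTwoPerClass (inv_injective.comp hinj)
    (atMostTwoPerClass_inv_iff.2 (atMostTwoPerClass_of_card_le_two hconj))

/-- If `S = {s₁, …, sₙ} ⊆ F_{q^t}^*` is P-independent and at most two elements
of `S` lie in each `θ`-conjugacy class, then `S⁻¹ = {s₁⁻¹, …, sₙ⁻¹}` is P-independent. -/
theorem pIndep_inv (q t n : ℕ) (F : Type) [Field F] [Fintype F]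
    (hF : Fintype.card F = q ^ t) (θ : F ≃+* F) (hθ : ∀ x : F, θ x = x ^ q)
    (s : Fin n → F) (hs0 : ∀ j, s j ≠ 0) (hinj : Function.Injective s)
    (hP : PIndep θ s)
    (hconj : ∀ a : F, Nat.card {j : Fin n // ∃ b : F, b ≠ 0 ∧ s j = θ b * a * b⁻¹} ≤ 2) :
    PIndep θ (fun j => (s j)⁻¹) :=
  pIndep_inv_general n F θ s hinj hconj
end

section
/- Let S = {s_1,...,s_n} ⊆ F_{q^t} with the skew Vandermonde matrix V_θ(s_1,...,s_n) = (N_i(s_j))_{0 ≤ i ≤ n−1, 1 ≤ j ≤ n} of full rank n, let v_1,...,v_n ∈ F_{q^t}^*, and let k ≤ n. Then the generalized skew Reed–Solomon code GSRS_k(S, v) = {(v_1 f(s_1), ..., v_n f(s_n)) : f ∈ F_{q^t}[X;θ], deg f < k} has dimension k and minimum Hamming distance exactly n − k + 1; i.e., it is MDS. -/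
/-!
The rows of the skew Vandermonde matrix are the iterates `Tⁱ 1` of the `θ`-semilinear map
`T x = (s_j θ(x_j))_j`, and the skew evaluations `f(s_j)` are the entries of `∑ fᵢ Tⁱ 1`.
For any semilinear map, the Krylov spaces `span {Tⁱ x | i < m}` stop growing once they fail to
grow at one step. Restriction to a set `J` of coordinates commutes with `T` and keeps the
iterates spanning, so `1, T 1, …, T^{k-1} 1` stay independent on any `k` coordinates: a nonzero
`f` of degree `< k` vanishes at fewer than `k` of the `s_j`. Hence every nonzero codeword has
weight at least `n - k + 1`, and the Singleton bound supplies a codeword of exactly that weight.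
-/

open Finset Module

open Submodule in
theorem iterate_mem_span_of_iterate_mem_span {K M : Type*} [Semiring K] [AddCommMonoid M]
    [Module K M] {σ : K →+* K} (T : M →ₛₗ[σ] M) (x : M) {m : ℕ}
    (hm : T^[m] x ∈ span K (Set.range fun i : Fin m => T^[i] x)) (i : ℕ) :
    T^[i] x ∈ span K (Set.range fun i : Fin m => T^[i] x) := by
  set W := span K (Set.range fun i : Fin m => T^[i] x)
  have hW : ∀ y ∈ W, T y ∈ W := by
    intro y hy
    induction hy using span_induction with
    | mem y hy =>
      obtain ⟨i, rfl⟩ := hy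
      rw [← Function.iterate_succ_apply' T]
      rcases (Nat.succ_le_of_lt i.isLt).lt_or_eq with hi | hi
      · exact subset_span ⟨⟨i + 1, hi⟩, rfl⟩
      · rwa [hi]
    | zero => simp
    | add y z _ _ hy hz => simpa using add_mem hy hz
    | smul c y _ hy => simpa using smul_mem W (σ c) hy
  induction i with
  | zero =>
    rcases m with _ | m
    · exact hm
    · exact subset_span ⟨0, rfl⟩
  | succ i ih => simpa [Function.iterate_succ_apply'] using hW _ ih

theorem linearIndependent_iterate_of_span_eq_top {K M : Type*} [DivisionRing K] [AddCommGroup M]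
    [Module K M] {σ : K →+* K} (T : M →ₛₗ[σ] M) (x : M)
    (hx : Submodule.span K (Set.range fun i : ℕ => T^[i] x) = ⊤) {m : ℕ}
    (hm : m ≤ finrank K M) :
    LinearIndependent K (fun i : Fin m => T^[i] x) := by
  induction m with
  | zero => exact linearIndependent_empty_type
  | succ m ih =>
    rw [← Fin.snoc_init_self (fun i : Fin (m + 1) => T^[i] x), linearIndependent_finSnoc]
    refine ⟨ih (by omega), fun hmem => ?_⟩
    have htop : Submodule.span K (Set.range fun i : Fin m => T^[i] x) = ⊤ := by
      rw [eq_top_iff, ← hx]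
      exact Submodule.span_le.mpr
        (Set.range_subset_iff.mpr (iterate_mem_span_of_iterate_mem_span T x hmem))
    have hdim := finrank_range_le_card (R := K) fun i : Fin m => T^[i] x
    rw [Set.finrank, htop, finrank_top, Fintype.card_fin] at hdim
    omega

section HammingCodes
variable {F ι : Type*} [Field F] [Fintype ι] [DecidableEq F]

theorem Submodule.exists_ne_zero_hammingNorm_add_finrank_le (C : Submodule F (ι → F))
    (hC : 0 < finrank F C) :
    ∃ c ∈ C, c ≠ 0 ∧ hammingNorm c + finrank F C ≤ Fintype.card ι + 1 := by
  classical
  have hCle : finrank F C ≤ Fintype.card ι := by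
    simpa using C.finrank_le
  obtain ⟨J, -, hJ⟩ := exists_subset_card_eq (s := (univ : Finset ι))
    (n := finrank F C - 1) (by rw [card_univ]; omega)
  let restrict : C →ₗ[F] J → F := LinearMap.funLeft F F ((↑) : J → ι) ∘ₗ C.subtype
  obtain ⟨c, hc, hc0⟩ := Submodule.exists_mem_ne_zero_of_ne_bot
    (LinearMap.ker_ne_bot_of_finrank_lt (f := restrict) (by simp [hJ]; omega))
  refine ⟨c, c.2, by simpa using hc0, ?_⟩
  have hsupp : ({i | (c : ι → F) i ≠ 0} : Finset ι) ⊆ univ \ J := fun i hi => by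
    refine mem_sdiff.mpr ⟨mem_univ i, fun hiJ => (mem_filter.mp hi).2 ?_⟩
    exact congrFun (LinearMap.mem_ker.mp hc) ⟨i, hiJ⟩
  have hcard := card_le_card hsupp
  rw [card_univ_sdiff, hJ] at hcard
  simp only [hammingNorm]
  omega

theorem sInf_hammingNorm_eq {C : Submodule F (ι → F)} {d : ℕ}
    (hlow : ∀ c ∈ C, c ≠ 0 → d ≤ hammingNorm c)
    (hup : ∃ c ∈ C, c ≠ 0 ∧ hammingNorm c ≤ d) :
    sInf {w | ∃ c ∈ C, c ≠ 0 ∧ hammingNorm c = w} = d := by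
  obtain ⟨c, hc, hc0, hcd⟩ := hup
  have hmem : hammingNorm c ∈ {w | ∃ c ∈ C, c ≠ 0 ∧ hammingNorm c = w} :=
    ⟨c, hc, hc0, rfl⟩
  refine le_antisymm ((Nat.sInf_le hmem).trans hcd) (le_csInf ⟨_, hmem⟩ ?_)
  rintro _ ⟨c', hc', hc0', rfl⟩
  exact hlow c' hc' hc0'

theorem hammingNorm_mul_of_ne_zero {v : ι → F} (hv : ∀ j, v j ≠ 0) (x : ι → F) :
    hammingNorm (v * x) = hammingNorm x := by
  simp only [hammingNorm, Pi.mul_apply, ne_eq, mul_eq_zero, hv, false_or]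

end HammingCodes

section SkewShift
variable {F : Type*} [Field F] (θ : F ≃+* F) {ι : Type*}

def skewShift (s : ι → F) : (ι → F) →ₛₗ[(θ : F →+* F)] ι → F where
  toFun x j := s j * θ (x j)
  map_add' x y := by funext j; simp [mul_add]
  map_smul' c x := by
    funext j
    simp only [Pi.smul_apply, smul_eq_mul, map_mul, RingEquiv.coe_toRingHom]
    ring

theorem skewShift_iterate_one_apply (s : ι → F) (i : ℕ) (j : ι) :
    (skewShift θ s)^[i] 1 j = ∏ u ∈ range i, (θ ^ u) (s j) := by
  induction i with
  | zero => simp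
  | succ i ih =>
    rw [Function.iterate_succ_apply', prod_range_succ', pow_zero]
    change s j * θ ((skewShift θ s)^[i] 1 j) = _
    rw [ih, map_prod, mul_comm]
    simp [pow_succ']

theorem span_iterate_skewShift_eq_top_of_rank [Fintype ι] {m : ℕ} (s : ι → F)
    (hV : (Matrix.of fun (i : Fin m) (j : ι) => ∏ u ∈ range (i : ℕ), (θ ^ u) (s j)).rank
      = Fintype.card ι) :
    Submodule.span F (Set.range fun i : ℕ => (skewShift θ s)^[i] 1) = ⊤ := by
  rw [Matrix.rank_eq_finrank_span_row] at hV
  have hrows :=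
    Submodule.eq_top_of_finrank_eq (hV.trans (finrank_fintype_fun_eq_card F).symm)
  rw [eq_top_iff, ← hrows]
  refine Submodule.span_mono (Set.range_subset_iff.mpr fun i => ⟨i, ?_⟩)
  funext j
  simp [skewShift_iterate_one_apply]

theorem funLeft_skewShift_iterate_one {κ : Type*} (s : ι → F) (g : κ → ι) (i : ℕ) :
    LinearMap.funLeft F F g ((skewShift θ s)^[i] 1) = (skewShift θ (s ∘ g))^[i] 1 := by
  funext j
  simp [LinearMap.funLeft_apply, skewShift_iterate_one_apply]

theorem span_iterate_skewShift_comp_eq_top {κ : Type*} (s : ι → F) {g : κ → ι}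
    (hg : Function.Injective g)
    (hs : Submodule.span F (Set.range fun i : ℕ => (skewShift θ s)^[i] 1) = ⊤) :
    Submodule.span F (Set.range fun i : ℕ => (skewShift θ (s ∘ g))^[i] 1) = ⊤ := by
  have hrange : (Set.range fun i : ℕ => (skewShift θ (s ∘ g))^[i] 1)
      = LinearMap.funLeft F F g '' Set.range fun i : ℕ => (skewShift θ s)^[i] 1 := by
    rw [← Set.range_comp]
    simp only [Function.comp_def, funLeft_skewShift_iterate_one]
  rw [hrange, ← Submodule.map_span, hs, Submodule.map_top, LinearMap.range_eq_top]
  exact LinearMap.funLeft_surjective_of_injective F F g hg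

theorem card_lt_hammingNorm_sum_iterate_skewShift_add [Fintype ι] [DecidableEq F] (s : ι → F)
    (hs : Submodule.span F (Set.range fun i : ℕ => (skewShift θ s)^[i] 1) = ⊤)
    {k : ℕ} {c : Fin k → F} (hc : c ≠ 0) :
    Fintype.card ι < hammingNorm (∑ i, c i • (skewShift θ s)^[i] 1) + k := by
  set p := ∑ i, c i • (skewShift θ s)^[i] 1
  by_contra! hle
  have hzeros : k ≤ #{j | p j = 0} := by
    have := card_filter_add_card_filter_not (s := univ) (fun j => p j = 0)
    rw [card_univ] at this
    simp only [hammingNorm, ne_eq] at hle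
    omega
  obtain ⟨J, hJZ, hJ⟩ := exists_subset_card_eq hzeros
  have hli : LinearIndependent F fun i : Fin k => (skewShift θ (s ∘ (↑) : J → F))^[i] 1 :=
    linearIndependent_iterate_of_span_eq_top (skewShift θ (s ∘ (↑) : J → F)) 1
    (span_iterate_skewShift_comp_eq_top θ s Subtype.val_injective hs)
    (by simp [hJ])
  refine hc (funext (Fintype.linearIndependent_iff.mp hli c ?_))
  calc ∑ i, c i • (skewShift θ (s ∘ (↑) : J → F))^[i] 1
      = LinearMap.funLeft F F ((↑) : J → ι) p := by
        simp only [p, map_sum, map_smul, funLeft_skewShift_iterate_one]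
    _ = 0 := funext fun j => (mem_filter.mp (hJZ j.2)).2

end SkewShift

theorem gsrs_is_mds_general (n k : ℕ) (F : Type) [Field F] [DecidableEq F]
    (θ : F ≃+* F)
    (s : Fin n → F)
    (hV : (Matrix.of fun (i j : Fin n) => ∏ u ∈ range (i : ℕ), (θ ^ u) (s j)).rank = n)
    (v : Fin n → F) (hv : ∀ j, v j ≠ 0) (hk : 0 < k) (hkn : k ≤ n) :
    Module.finrank F
        (LinearMap.range (Matrix.mulVecLin
          (Matrix.of fun (j : Fin n) (i : Fin k) =>
            v j * ∏ u ∈ range (i : ℕ), (θ ^ u) (s j)))) = k ∧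
      sInf {w | ∃ c ∈ LinearMap.range (Matrix.mulVecLin
          (Matrix.of fun (j : Fin n) (i : Fin k) =>
            v j * ∏ u ∈ range (i : ℕ), (θ ^ u) (s j))),
        c ≠ 0 ∧ hammingNorm c = w} = n - k + 1 := by
  set G : Matrix (Fin n) (Fin k) F :=
    Matrix.of fun j i => v j * ∏ u ∈ range (i : ℕ), (θ ^ u) (s j)
  have hspan := span_iterate_skewShift_eq_top_of_rank θ s (by rwa [Fintype.card_fin])
  have hweight : ∀ c ≠ 0, n < hammingNorm (G.mulVecLin c) + k := fun c hc => by
    have hG : G.mulVecLin c = v * ∑ i, c i • (skewShift θ s)^[i] 1 := by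
      funext j
      simp only [G, Matrix.mulVecLin_apply, Matrix.mulVec, dotProduct, Matrix.of_apply,
        Pi.mul_apply, Finset.sum_apply, Pi.smul_apply, smul_eq_mul, skewShift_iterate_one_apply,
        mul_sum]
      exact sum_congr rfl fun i _ => by ring
    rw [hG, hammingNorm_mul_of_ne_zero hv]
    simpa using card_lt_hammingNorm_sum_iterate_skewShift_add θ s hspan hc
  have hinj : Function.Injective G.mulVecLin := (injective_iff_map_eq_zero _).mpr
    fun c hc => by_contra fun hc0 => by
      have := hweight c hc0
      rw [hc, hammingNorm_zero] at this
      omega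
  have hdim : finrank F (LinearMap.range G.mulVecLin) = k := by
    rw [LinearMap.finrank_range_of_inj hinj, finrank_fin_fun]
  refine ⟨hdim, sInf_hammingNorm_eq ?_ ?_⟩
  · rintro _ ⟨c, rfl⟩ hc0
    have := hweight c (by rintro rfl; simp at hc0)
    omega
  · obtain ⟨c, hc, hc0, hle⟩ :=
      (LinearMap.range G.mulVecLin).exists_ne_zero_hammingNorm_add_finrank_le (by omega)
    exact ⟨c, hc, hc0, by rw [hdim, Fintype.card_fin] at hle; omega⟩

/-- Let `S = {s₁,…,sₙ} ⊆ F_{q^t}` with skew Vandermonde matrix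
`V_θ = (N_i(s_j))_{0≤i≤n−1, 1≤j≤n}` of full rank `n` (where `N_i(a) = ∏_{u<i} θ^u(a)` are the
partial norms), let `v₁,…,vₙ ∈ F_{q^t}^*` and `0 < k ≤ n`. Then the generalized skew
Reed–Solomon code `GSRS_k(S,v) = {(v₁f(s₁),…,vₙf(sₙ)) : f ∈ F_{q^t}[X;θ], deg f < k}`
(with skew evaluation `f(s) = ∑ fᵢ N_i(s)`) has dimension `k` and minimum Hamming distance
exactly `n − k + 1`; i.e. it is MDS. -/
theorem gsrs_is_mds (q t n k : ℕ) (F : Type) [Field F] [Fintype F] [DecidableEq F]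
    (hF : Fintype.card F = q ^ t) (θ : F ≃+* F) (hθ : ∀ x : F, θ x = x ^ q)
    (s : Fin n → F)
    (hV : (Matrix.of fun (i j : Fin n) => ∏ u ∈ range (i : ℕ), (θ ^ u) (s j)).rank = n)
    (v : Fin n → F) (hv : ∀ j, v j ≠ 0) (hk : 0 < k) (hkn : k ≤ n) :
    Module.finrank F
        (LinearMap.range (Matrix.mulVecLin
          (Matrix.of fun (j : Fin n) (i : Fin k) =>
            v j * ∏ u ∈ range (i : ℕ), (θ ^ u) (s j)))) = k ∧
      sInf {w | ∃ c ∈ LinearMap.range (Matrix.mulVecLin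
          (Matrix.of fun (j : Fin n) (i : Fin k) =>
            v j * ∏ u ∈ range (i : ℕ), (θ ^ u) (s j))),
        c ≠ 0 ∧ hammingNorm c = w} = n - k + 1 :=
  gsrs_is_mds_general n k F θ s hV v hv hk hkn
end
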